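/- arXiv:2002.06808 — 3 statements merged into one kernel-verified Lean document; each statement's English description precedes it below -/
import Mathlib

section
/- Each Riccati iterate K_t(r) is symmetric positive semidefinite (so γ bᵀK_t(r) b + r > 0 and the recursion is well defined), the Bellman iterates v_t := T^t 0 starting from the zero function v₀ ≡ 0 are well-defined elements of V, and for every t ≥ 0, x ∈ ℝ^d and r > 0 one has the closed form (T^{t+1} 0)(x,r) = xᵀK_t(r) x + Σ_{m=0}^{t−1} γ^{t−m} ∫ nᵀK_m(r) n dμ(n). -/
/-!
Every Bellman iterate is, in `x`, a quadratic form plus a constant. If `v(y, r) = yᵀKy + c` with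
`K ⪰ 0`, the zero-mean noise contributes only `∫ nᵀKn dμ`, and the minimisation over `u` is
completing the square in a scalar quadratic with leading coefficient `γ bᵀKb + r > 0`; the
result is `xᵀ (riccatiStep K) x + γ (∫ nᵀKn dμ + c)`. With `z = Ax`, the Riccati correction
`γ zᵀKz − γ² (bᵀKz)² / (γ bᵀKb + r)` is that same minimum over `u` of the nonnegative
`r u² + γ (z + ub)ᵀK(z + ub)`, so `riccatiStep` preserves positive semidefiniteness. Finiteness
of `‖Tᵗ 0‖` needs bounds uniform in `r`; they come from comparing `K_t(r)` with the cost of the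
control `u ≡ 0`.
-/

open MeasureTheory Matrix Filter

noncomputable section

/-- The weighted sup-norm `‖v‖ = sup_{(x,r) ∈ S} |v(x,r)| / (max(‖(x,r)‖₂,1))²` on functions on
`S = ℝ^d × (0,∞)` (the `r`-argument is curried; only `r > 0` matters). -/
def normV {d : ℕ} (v : (Fin d → ℝ) → ℝ → ℝ) : ENNReal :=
  ⨆ (x : Fin d → ℝ) (r : Set.Ioi (0 : ℝ)),
    ENNReal.ofReal (|v x r.1| / (max (Real.sqrt ((∑ i, x i ^ 2) + r.1 ^ 2)) 1) ^ 2)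

/-- The Bellman operator
`(Tv)(x,r) = xᵀQx + inf_u ( r u² + γ ∫ v(Ax + b u + n, r) dμ(n) )`. -/
def bellmanT {d : ℕ} (A Q : Matrix (Fin d) (Fin d) ℝ) (b : Fin d → ℝ) (γ : ℝ)
    (μ : Measure (Fin d → ℝ)) (v : (Fin d → ℝ) → ℝ → ℝ) : (Fin d → ℝ) → ℝ → ℝ :=
  fun x r => x ⬝ᵥ Q.mulVec x +
    ⨅ u : ℝ, (r * u ^ 2 + γ * ∫ n, v (A.mulVec x + u • b + n) r ∂μ)

/-- One step of the Riccati recursion with control penalty `r`: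
`K ↦ Q + Aᵀ( γK − (γ²/(γ bᵀK b + r)) K b bᵀ K )A`. -/
def riccatiStep {d : ℕ} (A Q : Matrix (Fin d) (Fin d) ℝ) (b : Fin d → ℝ) (γ r : ℝ)
    (K : Matrix (Fin d) (Fin d) ℝ) : Matrix (Fin d) (Fin d) ℝ :=
  Q + Aᵀ * (γ • K - (γ ^ 2 / (γ * (b ⬝ᵥ K.mulVec b) + r)) • (K * vecMulVec b b * K)) * A

/-- The Riccati iterates `K_0(r) = Q`, `K_{t+1}(r) = riccatiStep K_t(r)`. -/
def riccatiIter {d : ℕ} (A Q : Matrix (Fin d) (Fin d) ℝ) (b : Fin d → ℝ) (γ r : ℝ)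
    (t : ℕ) : Matrix (Fin d) (Fin d) ℝ :=
  (riccatiStep A Q b γ r)^[t] Q

open Finset

theorem Matrix.PosSemidef.isSymm {n : Type*} {K : Matrix n n ℝ} (hK : K.PosSemidef) :
    K.IsSymm :=
  isHermitian_iff_isSymm.1 hK.isHermitian

section QuadraticForm

variable {n : Type*} [Fintype n]

theorem Matrix.IsSymm.dotProduct_mulVec_comm {K : Matrix n n ℝ} (hK : K.IsSymm) (x y : n → ℝ) :
    x ⬝ᵥ K *ᵥ y = y ⬝ᵥ K *ᵥ x := by
  conv_lhs => rw [← hK.eq]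
  exact dotProduct_transpose_mulVec K x y

theorem Matrix.IsSymm.quadForm_add {K : Matrix n n ℝ} (hK : K.IsSymm) (x y : n → ℝ) :
    (x + y) ⬝ᵥ K *ᵥ (x + y) = x ⬝ᵥ K *ᵥ x + 2 * (y ⬝ᵥ K *ᵥ x) + y ⬝ᵥ K *ᵥ y := by
  simp only [mulVec_add, dotProduct_add, add_dotProduct]
  rw [hK.dotProduct_mulVec_comm x y]
  ring

theorem quadForm_transpose_mul_mul (A M : Matrix n n ℝ) (x : n → ℝ) :
    x ⬝ᵥ (Aᵀ * M * A) *ᵥ x = A *ᵥ x ⬝ᵥ M *ᵥ (A *ᵥ x) := by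
  rw [Matrix.mul_assoc, ← mulVec_mulVec, dotProduct_transpose_mulVec, mulVec_mulVec,
    dotProduct_comm]

theorem Matrix.IsSymm.quadForm_mul_vecMulVec_mul {K : Matrix n n ℝ} (hK : K.IsSymm)
    (b x : n → ℝ) : x ⬝ᵥ (K * vecMulVec b b * K) *ᵥ x = (b ⬝ᵥ K *ᵥ x) ^ 2 := by
  rw [← mulVec_mulVec, ← mulVec_mulVec, vecMulVec_mulVec, mulVec_smul, dotProduct_smul,
    hK.dotProduct_mulVec_comm x b]
  simp [sq]

theorem abs_quadForm_le (K : Matrix n n ℝ) (x : n → ℝ) :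
    |x ⬝ᵥ K *ᵥ x| ≤ (∑ i, ∑ j, |K i j|) * ∑ i, x i ^ 2 := by
  have hsq (i : n) : x i ^ 2 ≤ ∑ k, x k ^ 2 :=
    single_le_sum (fun k _ => sq_nonneg (x k)) (mem_univ i)
  have hprod (i j : n) : |x i| * |x j| ≤ ∑ k, x k ^ 2 := by
    nlinarith [sq_nonneg (|x i| - |x j|), sq_abs (x i), sq_abs (x j), hsq i, hsq j]
  calc |x ⬝ᵥ K *ᵥ x| = |∑ i, ∑ j, K i j * (x i * x j)| := by
        simp only [dotProduct, mulVec, mul_sum]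
        congr 1
        refine sum_congr rfl fun i _ => sum_congr rfl fun j _ => by ring
    _ ≤ ∑ i, ∑ j, |K i j * (x i * x j)| :=
        (abs_sum_le_sum_abs _ _).trans (sum_le_sum fun i _ => abs_sum_le_sum_abs _ _)
    _ ≤ ∑ i, ∑ j, |K i j| * ∑ k, x k ^ 2 := by
        gcongr with i _ j _
        rw [abs_mul, abs_mul]
        exact mul_le_mul_of_nonneg_left (hprod i j) (abs_nonneg _)
    _ = (∑ i, ∑ j, |K i j|) * ∑ k, x k ^ 2 := by simp only [sum_mul]

theorem Matrix.PosSemidef.quadForm_nonneg {K : Matrix n n ℝ} (hK : K.PosSemidef) (x : n → ℝ) :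
    0 ≤ x ⬝ᵥ K *ᵥ x := by
  simpa using hK.dotProduct_mulVec_nonneg x

end QuadraticForm

theorem ciInf_quadratic {a : ℝ} (ha : 0 < a) (β c : ℝ) :
    ⨅ u : ℝ, (a * u ^ 2 + β * u + c) = c - β ^ 2 / (4 * a) := by
  have hsq (u : ℝ) :
      a * u ^ 2 + β * u + c = a * (u + β / (2 * a)) ^ 2 + (c - β ^ 2 / (4 * a)) := by
    field_simp
    ring
  have hmin (u : ℝ) : c - β ^ 2 / (4 * a) ≤ a * u ^ 2 + β * u + c := by
    rw [hsq]
    exact le_add_of_nonneg_left (by positivity)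
  refine le_antisymm ?_ (le_ciInf hmin)
  refine (ciInf_le ⟨_, Set.forall_mem_range.2 hmin⟩ (-(β / (2 * a)))).trans_eq ?_
  rw [hsq]
  simp

section Riccati

variable {d : ℕ} {A Q K : Matrix (Fin d) (Fin d) ℝ} {b : Fin d → ℝ} {γ r : ℝ}

theorem Matrix.PosSemidef.riccatiDenom_pos (hK : K.PosSemidef) (hγ : 0 ≤ γ) (hr : 0 < r) :
    0 < γ * (b ⬝ᵥ K *ᵥ b) + r :=
  add_pos_of_nonneg_of_pos (mul_nonneg hγ (hK.quadForm_nonneg b)) hr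

theorem quadForm_riccatiStep (hK : K.IsSymm) (x : Fin d → ℝ) :
    x ⬝ᵥ riccatiStep A Q b γ r K *ᵥ x = x ⬝ᵥ Q *ᵥ x + (γ * (A *ᵥ x ⬝ᵥ K *ᵥ (A *ᵥ x))
      - γ ^ 2 / (γ * (b ⬝ᵥ K *ᵥ b) + r) * (b ⬝ᵥ K *ᵥ (A *ᵥ x)) ^ 2) := by
  rw [riccatiStep, add_mulVec, dotProduct_add, quadForm_transpose_mul_mul, sub_mulVec,
    dotProduct_sub, smul_mulVec, smul_mulVec, dotProduct_smul, dotProduct_smul,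
    hK.quadForm_mul_vecMulVec_mul, smul_eq_mul, smul_eq_mul]

theorem ciInf_controlCost (hK : K.IsSymm) (hD : 0 < γ * (b ⬝ᵥ K *ᵥ b) + r) (z : Fin d → ℝ)
    (c : ℝ) :
    ⨅ u : ℝ, (r * u ^ 2 + γ * ((z + u • b) ⬝ᵥ K *ᵥ (z + u • b) + c)) =
      γ * (z ⬝ᵥ K *ᵥ z) - γ ^ 2 / (γ * (b ⬝ᵥ K *ᵥ b) + r) * (b ⬝ᵥ K *ᵥ z) ^ 2 + γ * c := by
  have hexpand (u : ℝ) : r * u ^ 2 + γ * ((z + u • b) ⬝ᵥ K *ᵥ (z + u • b) + c) =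
      (γ * (b ⬝ᵥ K *ᵥ b) + r) * u ^ 2 + 2 * γ * (b ⬝ᵥ K *ᵥ z) * u
        + γ * (z ⬝ᵥ K *ᵥ z + c) := by
    rw [hK.quadForm_add]
    simp only [mulVec_smul, dotProduct_smul, smul_dotProduct, smul_eq_mul]
    ring
  simp_rw [hexpand]
  rw [ciInf_quadratic hD]
  field_simp
  ring

theorem isSymm_riccatiStep (hQ : Q.IsSymm) (hK : K.IsSymm) :
    (riccatiStep A Q b γ r K).IsSymm := by
  simp only [IsSymm, riccatiStep, transpose_add, transpose_mul, transpose_sub,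
    transpose_smul, transpose_transpose, transpose_vecMulVec, hQ.eq, hK.eq, Matrix.mul_assoc]

theorem posSemidef_riccatiStep (hQ : Q.PosSemidef) (hK : K.PosSemidef) (hγ : 0 ≤ γ)
    (hr : 0 < r) : (riccatiStep A Q b γ r K).PosSemidef := by
  refine .of_dotProduct_mulVec_nonneg
    (isHermitian_iff_isSymm.2 (isSymm_riccatiStep hQ.isSymm hK.isSymm)) fun x => ?_
  have hcost := ciInf_controlCost (b := b) hK.isSymm (hK.riccatiDenom_pos hγ hr) (A *ᵥ x) 0
  have hcost_nonneg : 0 ≤ ⨅ u : ℝ,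
      (r * u ^ 2 + γ * ((A *ᵥ x + u • b) ⬝ᵥ K *ᵥ (A *ᵥ x + u • b) + 0)) :=
    le_ciInf fun u => add_nonneg (by positivity)
      (mul_nonneg hγ (by rw [add_zero]; exact hK.quadForm_nonneg _))
  rw [star_trivial, quadForm_riccatiStep hK.isSymm]
  rw [hcost, mul_zero, add_zero] at hcost_nonneg
  exact add_nonneg (hQ.quadForm_nonneg x) hcost_nonneg

theorem riccatiIter_succ (t : ℕ) :
    riccatiIter A Q b γ r (t + 1) = riccatiStep A Q b γ r (riccatiIter A Q b γ r t) :=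
  Function.iterate_succ_apply' _ _ _

theorem posSemidef_riccatiIter (hQ : Q.PosSemidef) (hγ : 0 ≤ γ) (hr : 0 < r) (t : ℕ) :
    (riccatiIter A Q b γ r t).PosSemidef := by
  induction t with
  | zero => exact hQ
  | succ t ih => rw [riccatiIter_succ]; exact posSemidef_riccatiStep hQ ih hγ hr

/-- Cost matrices of the fixed control `u ≡ 0`: an upper bound for `riccatiIter` that does not
depend on `r`. -/
def zeroControlIter (A Q : Matrix (Fin d) (Fin d) ℝ) (γ : ℝ) (t : ℕ) :
    Matrix (Fin d) (Fin d) ℝ :=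
  (fun M => Q + γ • (Aᵀ * M * A))^[t] Q

theorem quadForm_riccatiIter_le (hQ : Q.PosSemidef) (hγ : 0 ≤ γ) (hr : 0 < r) (t : ℕ)
    (x : Fin d → ℝ) :
    x ⬝ᵥ riccatiIter A Q b γ r t *ᵥ x ≤ x ⬝ᵥ zeroControlIter A Q γ t *ᵥ x := by
  induction t generalizing x with
  | zero => rfl
  | succ t ih =>
    have hK := posSemidef_riccatiIter (A := A) (b := b) hQ hγ hr t
    have hstep : zeroControlIter A Q γ (t + 1) = Q + γ • (Aᵀ * zeroControlIter A Q γ t * A) :=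
      Function.iterate_succ_apply' _ _ _
    rw [riccatiIter_succ, hstep, quadForm_riccatiStep hK.isSymm, add_mulVec, dotProduct_add,
      smul_mulVec, dotProduct_smul, quadForm_transpose_mul_mul, smul_eq_mul]
    have hcontrol : 0 ≤ γ ^ 2 / (γ * (b ⬝ᵥ riccatiIter A Q b γ r t *ᵥ b) + r)
        * (b ⬝ᵥ riccatiIter A Q b γ r t *ᵥ (A *ᵥ x)) ^ 2 :=
      mul_nonneg (div_nonneg (sq_nonneg γ) (hK.riccatiDenom_pos hγ hr).le) (sq_nonneg _)
    nlinarith [mul_le_mul_of_nonneg_left (ih (A *ᵥ x)) hγ]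

end Riccati

section Noise

variable {n : Type*} [Fintype n] {μ : Measure (n → ℝ)}

theorem integrable_apply_of_integrable_sum_sq [IsFiniteMeasure μ]
    (hmom : Integrable (fun x => ∑ i, x i ^ 2) μ) (i : n) : Integrable (fun x => x i) μ := by
  refine ((integrable_const 1).add hmom).mono' (measurable_pi_apply i).aestronglyMeasurable
    (ae_of_all _ fun x => ?_)
  have hsq : x i ^ 2 ≤ ∑ k, x k ^ 2 := single_le_sum (fun k _ => sq_nonneg (x k)) (mem_univ i)
  simp only [Real.norm_eq_abs, Pi.add_apply]
  nlinarith [sq_nonneg (|x i| - 1), sq_abs (x i)]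

theorem integrable_quadForm (hmom : Integrable (fun x => ∑ i, x i ^ 2) μ) (K : Matrix n n ℝ) :
    Integrable (fun x => x ⬝ᵥ K *ᵥ x) μ := by
  have hcont : Continuous fun x : n → ℝ => x ⬝ᵥ K *ᵥ x := by
    simp only [dotProduct, mulVec]
    fun_prop
  exact (hmom.const_mul _).mono' hcont.aestronglyMeasurable
    (ae_of_all _ fun x => abs_quadForm_le K x)

theorem integral_dotProduct_eq_zero [IsFiniteMeasure μ]
    (hmom : Integrable (fun x => ∑ i, x i ^ 2) μ) (hmean : ∀ i, ∫ x, x i ∂μ = 0) (w : n → ℝ) :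
    ∫ x, x ⬝ᵥ w ∂μ = 0 := by
  simp only [dotProduct]
  rw [integral_finsetSum _ fun i _ => (integrable_apply_of_integrable_sum_sq hmom i).mul_const _]
  simp [integral_mul_const, hmean]

theorem integral_quadForm_add_add [IsProbabilityMeasure μ]
    (hmom : Integrable (fun x => ∑ i, x i ^ 2) μ) (hmean : ∀ i, ∫ x, x i ∂μ = 0)
    {K : Matrix n n ℝ} (hK : K.IsSymm) (y : n → ℝ) (c : ℝ) :
    ∫ x, ((y + x) ⬝ᵥ K *ᵥ (y + x) + c) ∂μ = y ⬝ᵥ K *ᵥ y + (∫ x, x ⬝ᵥ K *ᵥ x ∂μ + c) := by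
  have hlin : Integrable (fun x => x ⬝ᵥ K *ᵥ y) μ := by
    simp only [dotProduct]
    exact integrable_finsetSum _ fun i _ =>
      (integrable_apply_of_integrable_sum_sq hmom i).mul_const _
  have hquad := integrable_quadForm hmom K
  have hlin_quad : Integrable (fun x => 2 * (x ⬝ᵥ K *ᵥ y) + x ⬝ᵥ K *ᵥ x) μ :=
    (hlin.const_mul 2).add hquad
  have hexpand : (fun x => (y + x) ⬝ᵥ K *ᵥ (y + x) + c) =
      fun x => (y ⬝ᵥ K *ᵥ y + c) + (2 * (x ⬝ᵥ K *ᵥ y) + x ⬝ᵥ K *ᵥ x) := by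
    ext x
    rw [hK.quadForm_add]
    ring
  rw [hexpand, integral_add (integrable_const _) hlin_quad,
    integral_add (hlin.const_mul 2) hquad, integral_const_mul,
    integral_dotProduct_eq_zero hmom hmean, integral_const]
  simp
  ring

end Noise

section Bellman

variable {d : ℕ} {A Q K : Matrix (Fin d) (Fin d) ℝ} {b : Fin d → ℝ} {γ r : ℝ}
  {μ : Measure (Fin d → ℝ)} [IsProbabilityMeasure μ]

theorem bellmanT_apply_of_quadratic (hmean : ∀ i, ∫ n, n i ∂μ = 0)
    (hmom : Integrable (fun n => ∑ i, n i ^ 2) μ) (hK : K.PosSemidef) (hγ : 0 ≤ γ) (hr : 0 < r)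
    {v : (Fin d → ℝ) → ℝ → ℝ} {c : ℝ} (hv : ∀ y, v y r = y ⬝ᵥ K *ᵥ y + c) (x : Fin d → ℝ) :
    bellmanT A Q b γ μ v x r =
      x ⬝ᵥ riccatiStep A Q b γ r K *ᵥ x + γ * (∫ n, n ⬝ᵥ K *ᵥ n ∂μ + c) := by
  have hexpect (u : ℝ) : ∫ n, v (A *ᵥ x + u • b + n) r ∂μ =
      (A *ᵥ x + u • b) ⬝ᵥ K *ᵥ (A *ᵥ x + u • b) + (∫ n, n ⬝ᵥ K *ᵥ n ∂μ + c) := by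
    simp_rw [hv]
    exact integral_quadForm_add_add hmom hmean hK.isSymm _ c
  simp only [bellmanT, hexpect]
  rw [ciInf_controlCost hK.isSymm (hK.riccatiDenom_pos hγ hr), quadForm_riccatiStep hK.isSymm]
  ring

end Bellman

theorem sum_range_succ_pow_sub_mul {R : Type*} [CommSemiring R] (γ : R) (f : ℕ → R) (t : ℕ) :
    ∑ m ∈ range (t + 1), γ ^ (t + 1 - m) * f m =
      γ * (f t + ∑ m ∈ range t, γ ^ (t - m) * f m) := by
  rw [sum_range_succ, Nat.add_sub_cancel_left, pow_one, mul_add, mul_sum, add_comm]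
  congr 1
  refine sum_congr rfl fun m hm => ?_
  rw [Nat.sub_add_comm (mem_range.1 hm).le, pow_succ]
  ring

theorem normV_lt_top_of_abs_le {d : ℕ} {v : (Fin d → ℝ) → ℝ → ℝ} {B : ℝ}
    (h : ∀ x, ∀ r > 0, |v x r| ≤ B * (∑ i, x i ^ 2 + 1)) : normV v < ⊤ := by
  refine lt_of_le_of_lt ?_ (ENNReal.ofReal_lt_top (r := 2 * |B|))
  refine iSup₂_le fun x r => ENNReal.ofReal_le_ofReal ?_
  set S := ∑ i, x i ^ 2
  set M := max (Real.sqrt (S + r.1 ^ 2)) 1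
  have hS : 0 ≤ S := sum_nonneg fun i _ => sq_nonneg _
  have hSM : S + 1 ≤ 2 * M ^ 2 := by
    have hsqrt := Real.sq_sqrt (by positivity : 0 ≤ S + r.1 ^ 2)
    have hM := le_max_left (Real.sqrt (S + r.1 ^ 2)) 1
    have hM1 : 1 ≤ M := le_max_right _ _
    nlinarith [Real.sqrt_nonneg (S + r.1 ^ 2), sq_nonneg r.1]
  rw [div_le_iff₀ (by positivity)]
  calc |v x r| ≤ B * (S + 1) := h x r r.2
    _ ≤ |B| * (S + 1) := mul_le_mul_of_nonneg_right (le_abs_self B) (by positivity)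
    _ ≤ |B| * (2 * M ^ 2) := mul_le_mul_of_nonneg_left hSM (abs_nonneg B)
    _ = 2 * |B| * M ^ 2 := by ring

section BellmanIterates

variable {d : ℕ} {A Q : Matrix (Fin d) (Fin d) ℝ} {b : Fin d → ℝ} {γ r : ℝ}
  {μ : Measure (Fin d → ℝ)} [IsProbabilityMeasure μ]

theorem bellmanT_iterate_succ_apply (hQ : Q.PosSemidef) (hγ : 0 ≤ γ)
    (hmean : ∀ i, ∫ n, n i ∂μ = 0) (hmom : Integrable (fun n => ∑ i, n i ^ 2) μ) (hr : 0 < r)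
    (t : ℕ) (x : Fin d → ℝ) :
    (bellmanT A Q b γ μ)^[t + 1] (fun _ _ => 0) x r =
      x ⬝ᵥ riccatiIter A Q b γ r t *ᵥ x +
        ∑ m ∈ range t, γ ^ (t - m) * ∫ n, n ⬝ᵥ riccatiIter A Q b γ r m *ᵥ n ∂μ := by
  induction t generalizing x with
  | zero =>
    -- the zero function is the quadratic with `K = 0`, and `riccatiStep 0 = Q`
    have hzero := bellmanT_apply_of_quadratic (A := A) (Q := Q) (b := b) hmean hmom
      PosSemidef.zero hγ hr (v := fun _ _ => 0) (c := 0) (fun y => by simp) x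
    simpa [riccatiStep, riccatiIter] using hzero
  | succ t ih =>
    rw [Function.iterate_succ_apply', bellmanT_apply_of_quadratic hmean hmom
      (posSemidef_riccatiIter hQ hγ hr t) hγ hr ih, ← riccatiIter_succ, sum_range_succ_pow_sub_mul]

theorem normV_bellmanT_iterate_lt_top (hQ : Q.PosSemidef) (hγ : 0 ≤ γ)
    (hmean : ∀ i, ∫ n, n i ∂μ = 0) (hmom : Integrable (fun n => ∑ i, n i ^ 2) μ) (t : ℕ) :
    normV ((bellmanT A Q b γ μ)^[t] (fun _ _ => 0)) < ⊤ := by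
  cases t with
  | zero => exact normV_lt_top_of_abs_le (B := 0) fun x r _ => by simp
  | succ t =>
    set L := zeroControlIter A Q γ
    set C := ∑ i, ∑ j, |L t i j|
    set N := ∑ m ∈ range t, γ ^ (t - m) * ∫ n, n ⬝ᵥ L m *ᵥ n ∂μ
    refine normV_lt_top_of_abs_le (B := |C| + |N|) fun x r hr => ?_
    rw [bellmanT_iterate_succ_apply hQ hγ hmean hmom hr]
    have hK (m : ℕ) := posSemidef_riccatiIter (A := A) (b := b) hQ hγ hr m
    have hquad : x ⬝ᵥ riccatiIter A Q b γ r t *ᵥ x ≤ C * ∑ i, x i ^ 2 :=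
      (quadForm_riccatiIter_le hQ hγ hr t x).trans (le_of_abs_le (abs_quadForm_le _ x))
    have hnoise : ∑ m ∈ range t, γ ^ (t - m) * ∫ n, n ⬝ᵥ riccatiIter A Q b γ r m *ᵥ n ∂μ ≤ N :=
      sum_le_sum fun m _ => mul_le_mul_of_nonneg_left (integral_mono (integrable_quadForm hmom _)
        (integrable_quadForm hmom _) (quadForm_riccatiIter_le hQ hγ hr m)) (pow_nonneg hγ _)
    have hnoise_nonneg :
        0 ≤ ∑ m ∈ range t, γ ^ (t - m) * ∫ n, n ⬝ᵥ riccatiIter A Q b γ r m *ᵥ n ∂μ :=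
      sum_nonneg fun m _ =>
        mul_nonneg (pow_nonneg hγ _) (integral_nonneg (hK m).quadForm_nonneg)
    have hS : 0 ≤ ∑ i, x i ^ 2 := sum_nonneg fun i _ => sq_nonneg _
    rw [abs_of_nonneg (add_nonneg ((hK t).quadForm_nonneg x) hnoise_nonneg)]
    nlinarith [le_abs_self C, le_abs_self N, abs_nonneg C, abs_nonneg N]

end BellmanIterates

theorem bellman_iterates_closed_form_general
    (d : ℕ)
    (A Q : Matrix (Fin d) (Fin d) ℝ) (b : Fin d → ℝ) (hQ : Q.PosSemidef)
    (γ : ℝ) (hγ : γ ∈ Set.Ioo (0 : ℝ) 1)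
    (μ : Measure (Fin d → ℝ)) [IsProbabilityMeasure μ]
    (hmean : ∀ i, ∫ n, n i ∂μ = 0)
    (hmom : Integrable (fun n => ∑ i, (n i) ^ 2) μ) :
    -- positive semidefiniteness of the Riccati iterates, and positivity of the denominator
    (∀ r > (0 : ℝ), ∀ t : ℕ, (riccatiIter A Q b γ r t).PosSemidef ∧
      0 < γ * (b ⬝ᵥ (riccatiIter A Q b γ r t).mulVec b) + r) ∧
    -- the Bellman iterates starting from the zero function lie in V
    (∀ t : ℕ, normV ((bellmanT A Q b γ μ)^[t] (fun _ _ => 0)) < ⊤) ∧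
    -- closed form of the Bellman iterates
    (∀ t : ℕ, ∀ x : Fin d → ℝ, ∀ r > (0 : ℝ),
      ((bellmanT A Q b γ μ)^[t + 1] (fun _ _ => 0)) x r =
        x ⬝ᵥ (riccatiIter A Q b γ r t).mulVec x +
          ∑ m ∈ Finset.range t,
            γ ^ (t - m) * ∫ n, n ⬝ᵥ (riccatiIter A Q b γ r m).mulVec n ∂μ) := by
  have hγ0 : 0 ≤ γ := hγ.1.le
  refine ⟨fun r hr t => ?_, normV_bellmanT_iterate_lt_top hQ hγ0 hmean hmom,
    fun t x r hr => bellmanT_iterate_succ_apply hQ hγ0 hmean hmom hr t x⟩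
  have hK := posSemidef_riccatiIter (A := A) (b := b) hQ hγ0 hr t
  exact ⟨hK, hK.riccatiDenom_pos hγ0 hr⟩

/-- Each Riccati iterate `K_t(r)` is symmetric positive semidefinite (so
`γ bᵀK_t(r) b + r > 0`), the Bellman iterates `T^t 0` are well-defined elements of `V`, and for
every `t`, `x` and `r > 0`,
`(T^{t+1} 0)(x,r) = xᵀK_t(r) x + Σ_{m=0}^{t−1} γ^{t−m} ∫ nᵀK_m(r) n dμ(n)`. -/
theorem bellman_iterates_closed_form
    (d : ℕ) (hd : 1 ≤ d)
    (A Q : Matrix (Fin d) (Fin d) ℝ) (b : Fin d → ℝ) (hQ : Q.PosSemidef)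
    (γ : ℝ) (hγ : γ ∈ Set.Ioo (0 : ℝ) 1)
    (μ : Measure (Fin d → ℝ)) [IsProbabilityMeasure μ]
    (hmean : ∀ i, ∫ n, n i ∂μ = 0)
    (hmom : Integrable (fun n => ∑ i, (n i) ^ 2) μ) :
    -- positive semidefiniteness of the Riccati iterates, and positivity of the denominator
    (∀ r > (0 : ℝ), ∀ t : ℕ, (riccatiIter A Q b γ r t).PosSemidef ∧
      0 < γ * (b ⬝ᵥ (riccatiIter A Q b γ r t).mulVec b) + r) ∧
    -- the Bellman iterates starting from the zero function lie in V
    (∀ t : ℕ, normV ((bellmanT A Q b γ μ)^[t] (fun _ _ => 0)) < ⊤) ∧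
    -- closed form of the Bellman iterates
    (∀ t : ℕ, ∀ x : Fin d → ℝ, ∀ r > (0 : ℝ),
      ((bellmanT A Q b γ μ)^[t + 1] (fun _ _ => 0)) x r =
        x ⬝ᵥ (riccatiIter A Q b γ r t).mulVec x +
          ∑ m ∈ Finset.range t,
            γ ^ (t - m) * ∫ n, n ⬝ᵥ (riccatiIter A Q b γ r m).mulVec n ∂μ) :=
  bellman_iterates_closed_form_general d A Q b hQ γ hγ μ hmean hmom

end
end

section
/- Let r > 0, let K be a symmetric positive semidefinite solution of the discrete algebraic Riccati equation with penalty r, let u*(x) := −(γ/(γ bᵀK b + r)) bᵀK A x be the optimal stationary feedback, and let D := (I − (γ/(γ bᵀK b + r)) b bᵀ K) A, assumed to have all complex eigenvalues of modulus strictly less than 1. With the state process x_{t+1} := A x_t + b u*(x_t) + n_t = D x_t + n_t, the discounted cost of the optimal policy equals Σ_{t=0}^∞ γ^t E[x_tᵀQ x_t + r u*(x_t)²] = x₀ᵀK x₀ + (γ/(1−γ)) ∫ nᵀK n dμ(n), the series being convergent. -/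
open MeasureTheory Matrix Filter ProbabilityTheory

noncomputable section

/-- The optimal stationary feedback `u*(x) = −(γ/(γ bᵀK b + r)) bᵀK A x`. -/
def optFeedback {d : ℕ} (A : Matrix (Fin d) (Fin d) ℝ) (b : Fin d → ℝ) (γ r : ℝ)
    (K : Matrix (Fin d) (Fin d) ℝ) (x : Fin d → ℝ) : ℝ :=
  -(γ / (γ * (b ⬝ᵥ K.mulVec b) + r)) * (b ⬝ᵥ K.mulVec (A.mulVec x))

/-- The closed-loop matrix `D = (I − (γ/(γ bᵀK b + r)) b bᵀ K) A` of the optimal stationary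
policy. -/
def closedLoop {d : ℕ} (A : Matrix (Fin d) (Fin d) ℝ) (b : Fin d → ℝ) (γ r : ℝ)
    (K : Matrix (Fin d) (Fin d) ℝ) : Matrix (Fin d) (Fin d) ℝ :=
  (1 - (γ / (γ * (b ⬝ᵥ K.mulVec b) + r)) • (vecMulVec b b * K)) * A

open Topology

/-!
The value function `V y = yᵀ K y` satisfies the Bellman identity `V y = c y + γ V (D y)` for the
stage cost `c y = yᵀ Q y + r u*(y)²`; this is a rewriting of the Riccati equation. The noise `n_t`
is centred and independent of `x_t`, so the cross terms vanish in expectation and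
`E V(x_{t+1}) = E V(D x_t) + ∫ nᵀ K n dμ`. Hence the discounted expected costs telescope, up to
the remainder `γ^T E V(x_T)`; unrolling the recursion, `E V(x_T)` grows at most linearly in `T`
because stability forces `D^t → 0`.
-/

section Algebra

variable {ι : Type*} [Fintype ι]

theorem dotProduct_transpose_mul_mul_mulVec (A N B : Matrix ι ι ℝ) (v w : ι → ℝ) :
    v ⬝ᵥ (Aᵀ * N * B) *ᵥ w = (A *ᵥ v) ⬝ᵥ N *ᵥ (B *ᵥ w) := by
  rw [← mulVec_mulVec, ← mulVec_mulVec, dotProduct_mulVec, vecMul_transpose]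

theorem dotProduct_mul_vecMulVec_mul_mulVec (M N : Matrix ι ι ℝ) (u v p q : ι → ℝ) :
    p ⬝ᵥ (M * vecMulVec u v * N) *ᵥ q = (p ⬝ᵥ M *ᵥ u) * (v ⬝ᵥ N *ᵥ q) := by
  rw [mul_vecMulVec, vecMulVec_mul, vecMulVec_mulVec, ← dotProduct_mulVec, op_smul_eq_smul,
    dotProduct_smul, smul_eq_mul, mul_comm]

end Algebra

section Riccati

variable {d : ℕ} (A Q : Matrix (Fin d) (Fin d) ℝ) (b : Fin d → ℝ) (γ r : ℝ)
  (K : Matrix (Fin d) (Fin d) ℝ)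

theorem closedLoop_mulVec (y : Fin d → ℝ) :
    closedLoop A b γ r K *ᵥ y = A *ᵥ y + optFeedback A b γ r K y • b := by
  rw [closedLoop, ← mulVec_mulVec, sub_mulVec, one_mulVec, smul_mulVec, ← mulVec_mulVec,
    vecMulVec_mulVec, optFeedback, op_smul_eq_smul, smul_smul, neg_mul, neg_smul, sub_eq_add_neg]

theorem quadForm_eq_stageCost_add_of_riccati (hK : K.IsSymm) (hs : γ * (b ⬝ᵥ K *ᵥ b) + r ≠ 0)
    (hdare : K = riccatiStep A Q b γ r K) (y : Fin d → ℝ) :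
    y ⬝ᵥ K *ᵥ y = (y ⬝ᵥ Q *ᵥ y + r * optFeedback A b γ r K y ^ 2) +
      γ * (closedLoop A b γ r K *ᵥ y ⬝ᵥ K *ᵥ (closedLoop A b γ r K *ᵥ y)) := by
  have hsymm : A *ᵥ y ⬝ᵥ K *ᵥ b = b ⬝ᵥ K *ᵥ (A *ᵥ y) := by
    rw [← dotProduct_transpose_mulVec, hK.eq]
  have hV : y ⬝ᵥ K *ᵥ y = y ⬝ᵥ Q *ᵥ y + γ * (A *ᵥ y ⬝ᵥ K *ᵥ (A *ᵥ y)) -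
      γ ^ 2 / (γ * (b ⬝ᵥ K *ᵥ b) + r) * (b ⬝ᵥ K *ᵥ (A *ᵥ y)) ^ 2 := by
    conv_lhs => rw [hdare, riccatiStep, add_mulVec, dotProduct_add,
      dotProduct_transpose_mul_mul_mulVec, sub_mulVec, dotProduct_sub, smul_mulVec,
      dotProduct_smul, smul_mulVec, dotProduct_smul, dotProduct_mul_vecMulVec_mul_mulVec, hsymm]
    simp only [smul_eq_mul]
    ring
  rw [hV, closedLoop_mulVec, optFeedback]
  simp only [mulVec_add, mulVec_smul, dotProduct_add, add_dotProduct, dotProduct_smul,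
    smul_dotProduct, smul_eq_mul, hsymm]
  field_simp
  ring

end Riccati

theorem tendsto_pow_nhds_zero_of_spectralRadius_lt_one {A : Type*} [NormedRing A]
    [NormedAlgebra ℂ A] [CompleteSpace A] {a : A} (ha : spectralRadius ℂ a < 1) :
    Tendsto (a ^ ·) atTop (𝓝 0) := by
  obtain ⟨ρ, hρ0, haρ, hρ1⟩ := ENNReal.lt_iff_exists_real_btwn.mp ha
  have hroot : ∀ᶠ n : ℕ in atTop, ‖a ^ n‖ ^ (1 / n : ℝ) < ρ := by
    filter_upwards [(spectrum.pow_norm_pow_one_div_tendsto_nhds_spectralRadius a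
      ).eventually_lt_const haρ] with n hn
    exact (ENNReal.ofReal_lt_ofReal_iff'.mp hn).1
  refine squeeze_zero_norm' ?_ (tendsto_pow_atTop_nhds_zero_of_lt_one hρ0 (by simpa using hρ1))
  filter_upwards [hroot, eventually_ne_atTop 0] with n hn hn0
  calc ‖a ^ n‖ = (‖a ^ n‖ ^ (1 / n : ℝ)) ^ n := by
        rw [one_div, Real.rpow_inv_natCast_pow (norm_nonneg _) hn0]
    _ ≤ ρ ^ n := pow_le_pow_left₀ (by positivity) hn.le n

theorem Matrix.tendsto_pow_nhds_zero_of_forall_spectrum_norm_lt_one {n : Type*} [Fintype n]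
    [DecidableEq n] (D : Matrix n n ℝ)
    (hD : ∀ z ∈ spectrum ℂ (D.map Complex.ofReal), ‖z‖ < 1) :
    Tendsto (D ^ ·) atTop (𝓝 0) := by
  let _ := Matrix.linftyOpNormedRing (n := n) (α := ℂ)
  let _ := Matrix.linftyOpNormedAlgebra (n := n) (α := ℂ) (R := ℂ)
  have hrad : spectralRadius ℂ (D.map Complex.ofReal) < 1 := by
    rcases (spectrum ℂ (D.map Complex.ofReal)).eq_empty_or_nonempty with h | h
    · simp [spectralRadius, h]
    · exact_mod_cast spectrum.spectralRadius_lt_of_forall_lt_of_nonempty h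
        (fun z hz => by exact_mod_cast hD z hz)
  have hre : Continuous fun M : Matrix n n ℂ => M.map Complex.re :=
    continuous_id.matrix_map Complex.continuous_re
  convert (hre.tendsto 0).comp (tendsto_pow_nhds_zero_of_spectralRadius_lt_one hrad) using 1
  · ext k : 1
    change D ^ k = ((Complex.ofRealHom.mapMatrix D) ^ k).map Complex.re
    rw [← map_pow]
    ext
    simp
  · simp

section Probability

variable {Ω : Type*} [MeasurableSpace Ω] {P : Measure Ω}

theorem integrable_bilin_of_memLp_two {E F G : Type*} [NormedAddCommGroup E] [NormedSpace ℝ E]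
    [NormedAddCommGroup F] [NormedSpace ℝ F] [NormedAddCommGroup G] [NormedSpace ℝ G]
    {X : Ω → E} {Y : Ω → F} (hX : MemLp X 2 P) (hY : MemLp Y 2 P) (B : E →L[ℝ] F →L[ℝ] G) :
    Integrable (fun ω => B (X ω) (Y ω)) P :=
  memLp_one_iff_integrable.mp <| MemLp.of_bilin (B · ·) ‖B‖₊ hX hY
    (B.continuous₂.comp_aestronglyMeasurable₂ hX.1 hY.1)
    (ae_of_all _ fun _ => by rw [← NNReal.coe_le_coe]; exact B.le_opNorm₂ _ _)

theorem integrable_dotProduct_mulVec_of_memLp_two {ι : Type*} [Fintype ι] [DecidableEq ι]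
    {X : Ω → ι → ℝ} (hX : MemLp X 2 P) (M : Matrix ι ι ℝ) :
    Integrable (fun ω => X ω ⬝ᵥ M *ᵥ X ω) P := by
  simpa only [LinearMap.toContinuousBilinearMap_apply, toLinearMap₂'_apply'] using
    integrable_bilin_of_memLp_two hX hX
      (toLinearMap₂' ℝ M : (ι → ℝ) →ₗ[ℝ] (ι → ℝ) →ₗ[ℝ] ℝ).toContinuousBilinearMap

theorem memLp_id_two_of_integrable_sum_sq {ι : Type*} [Fintype ι] {μ : Measure (ι → ℝ)}
    (h : Integrable (fun n => ∑ i, n i ^ 2) μ) : MemLp id 2 μ :=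
  memLp_pi_iff.mpr fun i =>
    (memLp_two_iff_integrable_sq (measurable_pi_apply i).aestronglyMeasurable).mpr <|
    h.mono' ((measurable_pi_apply i).pow_const 2).aestronglyMeasurable <| ae_of_all _ fun n => by
      rw [Real.norm_eq_abs, abs_of_nonneg (sq_nonneg _)]
      exact Finset.single_le_sum (f := fun j => n j ^ 2) (fun j _ => sq_nonneg _)
        (Finset.mem_univ i)

theorem integral_id_eq_zero_of_forall_integral_eval {ι : Type*} [Fintype ι]
    {μ : Measure (ι → ℝ)} (hμ : Integrable id μ) (h : ∀ i, ∫ n, n i ∂μ = 0) : ∫ n, n ∂μ = 0 :=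
  funext fun i => (eval_integral (fun i => hμ.eval i) i).trans (h i)

theorem memLp_of_map_eq {ι : Type*} [Fintype ι] {f : Ω → ι → ℝ} {μ : Measure (ι → ℝ)}
    {p : ENNReal} (hf : Measurable f) (hfμ : P.map f = μ) (hμ : MemLp id p μ) : MemLp f p P :=
  (memLp_map_measure_iff aestronglyMeasurable_id hf.aemeasurable).mp (hfμ ▸ hμ)

theorem integral_eq_zero_of_map_eq {ι : Type*} [Fintype ι] {f : Ω → ι → ℝ}
    {μ : Measure (ι → ℝ)} (hf : Measurable f) (hfμ : P.map f = μ) (hμ : ∫ n, n ∂μ = 0) :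
    P[f] = 0 := by
  rw [← hμ, ← hfμ]
  exact (integral_map hf.aemeasurable aestronglyMeasurable_id).symm

theorem integral_bilin_add_self_of_indepFun [IsFiniteMeasure P] {E : Type*}
    [NormedAddCommGroup E] [NormedSpace ℝ E] [CompleteSpace E] [MeasurableSpace E] [BorelSpace E]
    {X Y : Ω → E} (hXY : IndepFun X Y P) (hX : MemLp X 2 P) (hY : MemLp Y 2 P) (hY0 : P[Y] = 0)
    (B : E →L[ℝ] E →L[ℝ] ℝ) :
    ∫ ω, B (X ω + Y ω) (X ω + Y ω) ∂P = ∫ ω, B (X ω) (X ω) ∂P + ∫ ω, B (Y ω) (Y ω) ∂P := by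
  have hcross : ∫ ω, B (X ω) (Y ω) ∂P = 0 ∧ ∫ ω, B (Y ω) (X ω) ∂P = 0 := by
    rw [hXY.integral_bilin (hX.integrable one_le_two) (hY.integrable one_le_two),
      hXY.symm.integral_bilin (hY.integrable one_le_two) (hX.integrable one_le_two), hY0]
    simp
  have hint {U V : Ω → E} (hU : MemLp U 2 P) (hV : MemLp V 2 P) :=
    integrable_bilin_of_memLp_two hU hV B
  simp only [map_add, _root_.add_apply]
  rw [integral_add, integral_add (hint hX hX) (hint hY hX),
    integral_add (hint hX hY) (hint hY hY), hcross.1, hcross.2]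
  · ring
  · exact (hint hX hX).add (hint hY hX)
  · exact (hint hX hY).add (hint hY hY)

theorem indepFun_of_measurable_iSup_Iio {ι β γ : Type*} [Preorder ι] [mβ : MeasurableSpace β]
    [MeasurableSpace γ] {Z : ι → Ω → β} (hZ : ∀ k, Measurable (Z k)) (hind : iIndepFun Z P)
    {t : ι} {X : Ω → γ} (hX : Measurable[⨆ k ∈ Set.Iio t, mβ.comap (Z k)] X) :
    IndepFun X (Z t) P := by
  rw [IndepFun_iff_Indep]
  refine indep_of_indep_of_le (indep_iSup_of_disjoint (fun k => (hZ k).comap_le) hind.iIndep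
    (S := Set.Iio t) (T := {t}) (Set.disjoint_singleton_right.mpr (lt_irrefl t))) hX.comap_le ?_
  exact le_iSup₂ (f := fun k (_ : k ∈ ({t} : Set ι)) => mβ.comap (Z k)) t rfl

end Probability

theorem integral_stageCost_eq_of_riccati {d : ℕ} {A Q : Matrix (Fin d) (Fin d) ℝ} {b : Fin d → ℝ}
    {γ r : ℝ} {K : Matrix (Fin d) (Fin d) ℝ} (hK : K.IsSymm) (hs : γ * (b ⬝ᵥ K *ᵥ b) + r ≠ 0)
    (hdare : K = riccatiStep A Q b γ r K) {Ω : Type*} [MeasurableSpace Ω] {P : Measure Ω}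
    {X : Ω → Fin d → ℝ} (hX : MemLp X 2 P) :
    ∫ ω, (X ω ⬝ᵥ Q *ᵥ X ω + r * optFeedback A b γ r K (X ω) ^ 2) ∂P =
      ∫ ω, X ω ⬝ᵥ K *ᵥ X ω ∂P -
        γ * ∫ ω, X ω ⬝ᵥ ((closedLoop A b γ r K)ᵀ * K * closedLoop A b γ r K) *ᵥ X ω ∂P := by
  have hint := integrable_dotProduct_mulVec_of_memLp_two hX
  rw [← integral_const_mul, ← integral_sub (hint K) ((hint _).const_mul γ)]
  refine integral_congr_ae (ae_of_all _ fun ω => ?_)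
  dsimp only
  rw [dotProduct_transpose_mul_mul_mulVec, quadForm_eq_stageCost_add_of_riccati A Q b γ r K hK hs
    hdare]
  ring

section LinearRecursion

variable {ι : Type*} [Fintype ι] {Ω : Type*} {D : Matrix ι ι ℝ} {noise : ℕ → Ω → ι → ℝ}
  {x₀ : ι → ℝ} {x : ℕ → Ω → ι → ℝ}

theorem measurable_iSup_Iio_comap_noise (hx0 : x 0 = fun _ => x₀)
    (hstep : ∀ t ω, x (t + 1) ω = D *ᵥ x t ω + noise t ω) (t : ℕ) :
    Measurable[⨆ k ∈ Set.Iio t, MeasurableSpace.comap (noise k) inferInstance] (x t) := by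
  induction t with
  | zero => rw [hx0]; exact measurable_const
  | succ t ih =>
    have hle : (⨆ k ∈ Set.Iio t, MeasurableSpace.comap (noise k) inferInstance) ≤
        ⨆ k ∈ Set.Iio (t + 1), MeasurableSpace.comap (noise k) inferInstance :=
      biSup_mono fun k hk => (Set.mem_Iio.mp hk).trans (Nat.lt_succ_self t)
    have hnoise : Measurable[⨆ k ∈ Set.Iio (t + 1), MeasurableSpace.comap (noise k)
        inferInstance] (noise t) :=
      (comap_measurable (noise t)).mono
        (le_iSup₂ (f := fun k (_ : k ∈ Set.Iio (t + 1)) => MeasurableSpace.comap (noise k)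
          inferInstance) t (Nat.lt_succ_self t)) le_rfl
    rw [show x (t + 1) = fun ω => D *ᵥ x t ω + noise t ω from funext (hstep t)]
    exact ((continuous_const.matrix_mulVec continuous_id).measurable.comp (ih.mono hle le_rfl)).add
      hnoise

theorem memLp_two_of_linear_recursion [MeasurableSpace Ω] {P : Measure Ω}
    [IsFiniteMeasure P] (hx0 : x 0 = fun _ => x₀)
    (hstep : ∀ t ω, x (t + 1) ω = D *ᵥ x t ω + noise t ω) (hnoise : ∀ t, MemLp (noise t) 2 P)
    (t : ℕ) : MemLp (x t) 2 P := by
  induction t with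
  | zero => rw [hx0]; exact memLp_const x₀
  | succ t ih =>
    rw [show x (t + 1) = fun ω => D *ᵥ x t ω + noise t ω from funext (hstep t)]
    exact (ih.continuousLinearMap_comp (LinearMap.toContinuousLinearMap (mulVecLin D))).add
      (hnoise t)

theorem integral_quadForm_succ [DecidableEq ι] [MeasurableSpace Ω] {P : Measure Ω}
    [IsFiniteMeasure P] {μ : Measure (ι → ℝ)} (hx0 : x 0 = fun _ => x₀)
    (hstep : ∀ t ω, x (t + 1) ω = D *ᵥ x t ω + noise t ω) (hmeas : ∀ t, Measurable (noise t))
    (hind : iIndepFun noise P) (hlaw : ∀ t, P.map (noise t) = μ)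
    (hnoise : ∀ t, MemLp (noise t) 2 P) (hmean : ∀ t, P[noise t] = 0) (M : Matrix ι ι ℝ)
    (t : ℕ) :
    ∫ ω, x (t + 1) ω ⬝ᵥ M *ᵥ x (t + 1) ω ∂P =
      ∫ ω, x t ω ⬝ᵥ (Dᵀ * M * D) *ᵥ x t ω ∂P + ∫ n, n ⬝ᵥ M *ᵥ n ∂μ := by
  have hindep : IndepFun (fun ω => D *ᵥ x t ω) (noise t) P :=
    indepFun_of_measurable_iSup_Iio hmeas hind
      ((continuous_const.matrix_mulVec continuous_id).measurable.comp
        (measurable_iSup_Iio_comap_noise hx0 hstep t))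
  have hmemLp : MemLp (fun ω => D *ᵥ x t ω) 2 P :=
    (memLp_two_of_linear_recursion hx0 hstep hnoise t).continuousLinearMap_comp
      (LinearMap.toContinuousLinearMap (mulVecLin D))
  have h := integral_bilin_add_self_of_indepFun hindep hmemLp (hnoise t) (hmean t)
    (toLinearMap₂' ℝ M).toContinuousBilinearMap
  simp only [LinearMap.toContinuousBilinearMap_apply, toLinearMap₂'_apply'] at h
  rw [← hlaw t, integral_map (hmeas t).aemeasurable (by fun_prop)]
  simp_rw [hstep, dotProduct_transpose_mul_mul_mulVec]
  exact h

theorem integral_quadForm_eq_sum [DecidableEq ι] [MeasurableSpace Ω] {P : Measure Ω}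
    [IsProbabilityMeasure P] {μ : Measure (ι → ℝ)} (hx0 : x 0 = fun _ => x₀)
    (hstep : ∀ t ω, x (t + 1) ω = D *ᵥ x t ω + noise t ω) (hmeas : ∀ t, Measurable (noise t))
    (hind : iIndepFun noise P) (hlaw : ∀ t, P.map (noise t) = μ)
    (hnoise : ∀ t, MemLp (noise t) 2 P) (hmean : ∀ t, P[noise t] = 0) (M : Matrix ι ι ℝ)
    (t : ℕ) :
    ∫ ω, x t ω ⬝ᵥ M *ᵥ x t ω ∂P = (D ^ t *ᵥ x₀) ⬝ᵥ M *ᵥ (D ^ t *ᵥ x₀) +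
      ∑ k ∈ Finset.range t, ∫ n, (D ^ k *ᵥ n) ⬝ᵥ M *ᵥ (D ^ k *ᵥ n) ∂μ := by
  induction t generalizing M with
  | zero => simp [hx0]
  | succ t ih =>
    have hconj (k : ℕ) (v : ι → ℝ) : (D ^ k *ᵥ v) ⬝ᵥ (Dᵀ * M * D) *ᵥ (D ^ k *ᵥ v) =
        (D ^ (k + 1) *ᵥ v) ⬝ᵥ M *ᵥ (D ^ (k + 1) *ᵥ v) := by
      rw [dotProduct_transpose_mul_mul_mulVec, mulVec_mulVec, pow_succ']
    rw [integral_quadForm_succ hx0 hstep hmeas hind hlaw hnoise hmean, ih,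
      Finset.sum_range_succ' _ t]
    simp only [hconj, pow_zero, one_mulVec]
    ring

end LinearRecursion

section Growth

variable {ι : Type*} [Fintype ι] [DecidableEq ι]

theorem Matrix.exists_abs_quadForm_pow_mulVec_le {D : Matrix ι ι ℝ}
    (hD : Tendsto (D ^ ·) atTop (𝓝 0)) (M : Matrix ι ι ℝ) :
    ∃ C, ∀ (k : ℕ) (y : ι → ℝ), |(D ^ k *ᵥ y) ⬝ᵥ M *ᵥ (D ^ k *ᵥ y)| ≤ C * ‖y‖ ^ 2 := by
  let _ := Matrix.linftyOpNormedAddCommGroup (m := ι) (n := ι) (α := ℝ)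
  obtain ⟨C, hC⟩ := (Metric.isBounded_range_of_tendsto _ hD).exists_norm_le
  have hC0 : 0 ≤ C := (norm_nonneg _).trans (hC _ ⟨0, rfl⟩)
  let B := (toLinearMap₂' ℝ M : (ι → ℝ) →ₗ[ℝ] (ι → ℝ) →ₗ[ℝ] ℝ).toContinuousBilinearMap
  refine ⟨‖B‖ * C ^ 2, fun k y => ?_⟩
  have hDy : ‖D ^ k *ᵥ y‖ ≤ C * ‖y‖ :=
    (linfty_opNorm_mulVec _ _).trans (by gcongr; exact hC _ ⟨k, rfl⟩)
  calc |(D ^ k *ᵥ y) ⬝ᵥ M *ᵥ (D ^ k *ᵥ y)| = ‖B (D ^ k *ᵥ y) (D ^ k *ᵥ y)‖ := by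
        rw [Real.norm_eq_abs, LinearMap.toContinuousBilinearMap_apply, toLinearMap₂'_apply']
    _ ≤ ‖B‖ * ‖D ^ k *ᵥ y‖ * ‖D ^ k *ᵥ y‖ := B.le_opNorm₂ _ _
    _ ≤ ‖B‖ * (C * ‖y‖) * (C * ‖y‖) := by gcongr
    _ = ‖B‖ * C ^ 2 * ‖y‖ ^ 2 := by ring

theorem tendsto_pow_mul_quadForm_pow_mulVec_add_sum {D : Matrix ι ι ℝ}
    (hD : Tendsto (D ^ ·) atTop (𝓝 0)) {μ : Measure (ι → ℝ)} (hμ : MemLp id 2 μ)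
    (M : Matrix ι ι ℝ) (x₀ : ι → ℝ) {γ : ℝ} (hγ0 : 0 ≤ γ) (hγ1 : γ < 1) :
    Tendsto (fun t : ℕ => γ ^ t * ((D ^ t *ᵥ x₀) ⬝ᵥ M *ᵥ (D ^ t *ᵥ x₀) +
      ∑ k ∈ Finset.range t, ∫ n, (D ^ k *ᵥ n) ⬝ᵥ M *ᵥ (D ^ k *ᵥ n) ∂μ)) atTop (𝓝 0) := by
  obtain ⟨C, hC⟩ := exists_abs_quadForm_pow_mulVec_le hD M
  set σ := ∫ n, ‖n‖ ^ 2 ∂μ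
  have hterm (k : ℕ) : |∫ n, (D ^ k *ᵥ n) ⬝ᵥ M *ᵥ (D ^ k *ᵥ n) ∂μ| ≤ C * σ := by
    rw [← integral_const_mul]
    exact norm_integral_le_of_norm_le (f := fun n => (D ^ k *ᵥ n) ⬝ᵥ M *ᵥ (D ^ k *ᵥ n))
      ((hμ.integrable_norm_pow two_ne_zero).const_mul C)
      (ae_of_all _ fun n => hC k n)
  have hsum (t : ℕ) : |∑ k ∈ Finset.range t, ∫ n, (D ^ k *ᵥ n) ⬝ᵥ M *ᵥ (D ^ k *ᵥ n) ∂μ| ≤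
      t * (C * σ) := by
    refine (Finset.abs_sum_le_sum_abs _ _).trans ((Finset.sum_le_sum fun k _ => hterm k).trans ?_)
    rw [Finset.sum_const, Finset.card_range, nsmul_eq_mul]
  refine squeeze_zero_norm (fun t => ?_) (by
    simpa using ((tendsto_pow_atTop_nhds_zero_of_lt_one hγ0 hγ1).const_mul (C * ‖x₀‖ ^ 2)).add
      ((tendsto_self_mul_const_pow_of_lt_one hγ0 hγ1).const_mul (C * σ)))
  rw [norm_mul, norm_pow, Real.norm_eq_abs, Real.norm_eq_abs, abs_of_nonneg hγ0]
  calc γ ^ t * |_| ≤ γ ^ t * (C * ‖x₀‖ ^ 2 + t * (C * σ)) := by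
        gcongr
        exact (abs_add_le _ _).trans (add_le_add (hC t x₀) (hsum t))
    _ = C * ‖x₀‖ ^ 2 * γ ^ t + C * σ * (t * γ ^ t) := by ring

end Growth

theorem hasSum_pow_mul_of_eq_sub_mul {γ m : ℝ} {q c : ℕ → ℝ} (hγ0 : 0 ≤ γ) (hγ1 : γ < 1)
    (hc : ∀ t, 0 ≤ c t) (hcq : ∀ t, c t = q t - γ * (q (t + 1) - m))
    (hq : Tendsto (fun t => γ ^ t * q t) atTop (𝓝 0)) :
    HasSum (fun t => γ ^ t * c t) (q 0 + γ / (1 - γ) * m) := by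
  have hpartial (T : ℕ) : ∑ t ∈ Finset.range T, γ ^ t * c t =
      q 0 - γ ^ T * q T + m * ∑ t ∈ Finset.range T, γ * γ ^ t := by
    induction T with
    | zero => simp
    | succ T ih => rw [Finset.sum_range_succ, Finset.sum_range_succ, ih, hcq]; ring
  rw [hasSum_iff_tendsto_nat_of_nonneg (fun t => mul_nonneg (pow_nonneg hγ0 t) (hc t)),
    funext hpartial]
  convert (tendsto_const_nhds.sub hq).add
    (((hasSum_geometric_of_lt_one hγ0 hγ1).mul_left γ).tendsto_sum_nat.const_mul m) using 2
  ring

theorem optimal_policy_cost_closed_form_general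
    (d : ℕ)
    (A Q : Matrix (Fin d) (Fin d) ℝ) (b : Fin d → ℝ) (hQ : Q.PosSemidef)
    (γ : ℝ) (hγ : γ ∈ Set.Ioo (0 : ℝ) 1)
    (μ : Measure (Fin d → ℝ)) [IsProbabilityMeasure μ]
    (hmean : ∀ i, ∫ n, n i ∂μ = 0)
    (hmom : Integrable (fun n => ∑ i, (n i) ^ 2) μ)
    (r : ℝ) (hr : 0 < r)
    (K : Matrix (Fin d) (Fin d) ℝ) (hKpsd : K.PosSemidef)
    (hdare : K = riccatiStep A Q b γ r K)
    (hstable : ∀ z ∈ spectrum ℂ ((closedLoop A b γ r K).map Complex.ofReal), ‖z‖ < 1)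
    (Ω : Type) [MeasurableSpace Ω] (P : Measure Ω) [IsProbabilityMeasure P]
    (noise : ℕ → Ω → (Fin d → ℝ))
    (hmeas : ∀ t, Measurable (noise t))
    (hlaw : ∀ t, Measure.map (noise t) P = μ)
    (hindep : iIndepFun noise P)
    (x₀ : Fin d → ℝ)
    (x : ℕ → Ω → (Fin d → ℝ))
    (hx0 : x 0 = fun _ => x₀)
    (hxrec : ∀ t ω, x (t + 1) ω =
      A.mulVec (x t ω) + (optFeedback A b γ r K (x t ω)) • b + noise t ω) :
    HasSum
      (fun t => γ ^ t *
        ∫ ω, ((x t ω) ⬝ᵥ Q.mulVec (x t ω) + r * (optFeedback A b γ r K (x t ω)) ^ 2) ∂P)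
      (x₀ ⬝ᵥ K.mulVec x₀ + γ / (1 - γ) * ∫ n, n ⬝ᵥ K.mulVec n ∂μ) := by
  obtain ⟨hγ0, hγ1⟩ := hγ
  set D := closedLoop A b γ r K
  have hs : γ * (b ⬝ᵥ K *ᵥ b) + r ≠ 0 := by
    have := hKpsd.dotProduct_mulVec_nonneg b
    simp only [star_trivial] at this
    positivity
  have hstep (t : ℕ) (ω : Ω) : x (t + 1) ω = D *ᵥ x t ω + noise t ω := by
    rw [hxrec, closedLoop_mulVec]
  have hμ := memLp_id_two_of_integrable_sum_sq hmom
  have hnoise (t : ℕ) := memLp_of_map_eq (hmeas t) (hlaw t) hμ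
  have hcentred (t : ℕ) := integral_eq_zero_of_map_eq (hmeas t) (hlaw t)
    (integral_id_eq_zero_of_forall_integral_eval (hμ.integrable one_le_two) hmean)
  have hcost (t : ℕ) :
      ∫ ω, ((x t ω) ⬝ᵥ Q *ᵥ (x t ω) + r * (optFeedback A b γ r K (x t ω)) ^ 2) ∂P =
        ∫ ω, x t ω ⬝ᵥ K *ᵥ x t ω ∂P - γ * (∫ ω, x (t + 1) ω ⬝ᵥ K *ᵥ x (t + 1) ω ∂P -
          ∫ n, n ⬝ᵥ K *ᵥ n ∂μ) := by
    rw [integral_quadForm_succ hx0 hstep hmeas hindep hlaw hnoise hcentred, add_sub_cancel_right]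
    exact integral_stageCost_eq_of_riccati (isHermitian_iff_isSymm.mp hKpsd.isHermitian) hs hdare
      (memLp_two_of_linear_recursion hx0 hstep hnoise t)
  convert hasSum_pow_mul_of_eq_sub_mul hγ0.le hγ1 (fun t => integral_nonneg fun ω => ?_) hcost
    ?_ using 2
  · simp [hx0]
  · have := hQ.dotProduct_mulVec_nonneg (x t ω)
    simp only [star_trivial] at this
    positivity
  · simpa only [integral_quadForm_eq_sum hx0 hstep hmeas hindep hlaw hnoise hcentred] using
      tendsto_pow_mul_quadForm_pow_mulVec_add_sum
        (D.tendsto_pow_nhds_zero_of_forall_spectrum_norm_lt_one hstable) hμ K x₀ hγ0.le hγ1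

/-- The discounted cost of the optimal stationary policy `u*(x) = −(γ/(γbᵀKb+r)) bᵀKAx` equals
`x₀ᵀK x₀ + (γ/(1−γ)) ∫ nᵀK n dμ`, the series being convergent. -/
theorem optimal_policy_cost_closed_form
    (d : ℕ) (hd : 1 ≤ d)
    (A Q : Matrix (Fin d) (Fin d) ℝ) (b : Fin d → ℝ) (hQ : Q.PosSemidef)
    (γ : ℝ) (hγ : γ ∈ Set.Ioo (0 : ℝ) 1)
    (μ : Measure (Fin d → ℝ)) [IsProbabilityMeasure μ]
    (hmean : ∀ i, ∫ n, n i ∂μ = 0)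
    (hmom : Integrable (fun n => ∑ i, (n i) ^ 2) μ)
    (r : ℝ) (hr : 0 < r)
    (K : Matrix (Fin d) (Fin d) ℝ) (hKpsd : K.PosSemidef)
    (hdare : K = riccatiStep A Q b γ r K)
    (hstable : ∀ z ∈ spectrum ℂ ((closedLoop A b γ r K).map Complex.ofReal), ‖z‖ < 1)
    (Ω : Type) [MeasurableSpace Ω] (P : Measure Ω) [IsProbabilityMeasure P]
    (noise : ℕ → Ω → (Fin d → ℝ))
    (hmeas : ∀ t, Measurable (noise t))
    (hlaw : ∀ t, Measure.map (noise t) P = μ)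
    (hindep : iIndepFun noise P)
    (x₀ : Fin d → ℝ)
    (x : ℕ → Ω → (Fin d → ℝ))
    (hx0 : x 0 = fun _ => x₀)
    (hxrec : ∀ t ω, x (t + 1) ω =
      A.mulVec (x t ω) + (optFeedback A b γ r K (x t ω)) • b + noise t ω) :
    HasSum
      (fun t => γ ^ t *
        ∫ ω, ((x t ω) ⬝ᵥ Q.mulVec (x t ω) + r * (optFeedback A b γ r K (x t ω)) ^ 2) ∂P)
      (x₀ ⬝ᵥ K.mulVec x₀ + γ / (1 - γ) * ∫ n, n ⬝ᵥ K.mulVec n ∂μ) :=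
  optimal_policy_cost_closed_form_general d A Q b hQ γ hγ μ hmean hmom r hr K hKpsd hdare hstable Ω
    P noise hmeas hlaw hindep x₀ x hx0 hxrec
end
end

section
/- Let 0 ≤ ψ₁ < ψ₂ and α₁, α₂ > 0. Suppose the supremum defining L*(α₁, ψ₁) is finite and attained at some λ* > 0 at which the (4,4) entry of K_{λ*} is strictly positive, and that L*(α₁, ψ₁) = L*(α₂, ψ₂) ∈ ℝ (the two systems achieve the same optimal social cost). Then α₁ < α₂: the market with the higher renewable-supply variance necessarily operates at strictly higher price volatility. -/
open Matrix

noncomputable section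

/-- The state-noise covariance matrix `Ψ(ψ) = diag(ψ_d, ψ_s, 0, ψ)` of the market with
renewable-supply variance `ψ`. -/
def noiseCov (ψd ψs ψ : ℝ) : Matrix (Fin 4) (Fin 4) ℝ :=
  Matrix.diagonal ![ψd, ψs, 0, ψ]

/-- The dual objective `g(λ) = x₀ᵀK_λx₀ + (γ/(1−γ)) Tr(K_λ Ψ(ψ)) − λα` of the
volatility-constrained problem at renewable variance `ψ` and volatility level `α`. -/
def dualObj (x₀ : Fin 4 → ℝ) (γ : ℝ) (K : ℝ → Matrix (Fin 4) (Fin 4) ℝ)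
    (ψd ψs ψ α lam : ℝ) : ℝ :=
  x₀ ⬝ᵥ (K lam).mulVec x₀ + γ / (1 - γ) * Matrix.trace (K lam * noiseCov ψd ψs ψ) - lam * α

/-- Renewable penetration increases price volatility: if two markets differing only in their
renewable-supply variances `ψ₁ < ψ₂` achieve the same optimal social cost
`L*(α₁,ψ₁) = L*(α₂,ψ₂)`, the supremum defining `L*(α₁,ψ₁)` being attained at some `λ* > 0`
where the `(4,4)` entry of `K_{λ*}` is strictly positive, then `α₁ < α₂`: the market with more
renewables operates at strictly higher price volatility. -/
theorem renewables_increase_price_volatility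
    (x₀ : Fin 4 → ℝ) (γ : ℝ) (hγ : γ ∈ Set.Ioo (0 : ℝ) 1)
    (ψd ψs : ℝ) (hψd : 0 ≤ ψd) (hψs : 0 ≤ ψs)
    (K : ℝ → Matrix (Fin 4) (Fin 4) ℝ)
    (hK : ∀ lam > (0 : ℝ), (K lam).PosSemidef)
    (ψ₁ ψ₂ : ℝ) (hψ₁ : 0 ≤ ψ₁) (hψ : ψ₁ < ψ₂)
    (α₁ α₂ : ℝ) (hα₁ : 0 < α₁) (hα₂ : 0 < α₂)
    (lamStar : ℝ) (hlamStar : 0 < lamStar)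
    (hattain : ∀ lam > (0 : ℝ),
      dualObj x₀ γ K ψd ψs ψ₁ α₁ lam ≤ dualObj x₀ γ K ψd ψs ψ₁ α₁ lamStar)
    (hpos : 0 < K lamStar 3 3)
    (hbdd₂ : BddAbove (Set.range fun lam : Set.Ioi (0 : ℝ) =>
      dualObj x₀ γ K ψd ψs ψ₂ α₂ lam.1))
    (heq : (⨆ lam : Set.Ioi (0 : ℝ), dualObj x₀ γ K ψd ψs ψ₁ α₁ lam.1) =
      ⨆ lam : Set.Ioi (0 : ℝ), dualObj x₀ γ K ψd ψs ψ₂ α₂ lam.1) :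
    α₁ < α₂ := by
  have htr : ∀ ψ lam, Matrix.trace (K lam * noiseCov ψd ψs ψ) =
      ψd * K lam 0 0 + ψs * K lam 1 1 + ψ * K lam 3 3 := by
    intro ψ lam
    simp [noiseCov, Matrix.trace, Matrix.diag, Matrix.mul_diagonal,
      Fin.sum_univ_four]
    ring
  -- L₁ equals the value at lamStar
  have hmem : (⟨lamStar, hlamStar⟩ : Set.Ioi (0 : ℝ)) ∈ (Set.univ : Set (Set.Ioi (0:ℝ))) :=
    Set.mem_univ _
  have hbdd₁ : BddAbove (Set.range fun lam : Set.Ioi (0 : ℝ) =>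
      dualObj x₀ γ K ψd ψs ψ₁ α₁ lam.1) := by
    refine ⟨dualObj x₀ γ K ψd ψs ψ₁ α₁ lamStar, ?_⟩
    rintro y ⟨⟨lam, hlam⟩, rfl⟩
    exact hattain lam hlam
  have hne : Nonempty (Set.Ioi (0 : ℝ)) := ⟨⟨lamStar, hlamStar⟩⟩
  have hL1 : (⨆ lam : Set.Ioi (0 : ℝ), dualObj x₀ γ K ψd ψs ψ₁ α₁ lam.1) =
      dualObj x₀ γ K ψd ψs ψ₁ α₁ lamStar := by
    apply le_antisymm
    · exact ciSup_le fun ⟨lam, hlam⟩ => hattain lam hlam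
    · exact le_ciSup hbdd₁ ⟨lamStar, hlamStar⟩
  have hL2 : dualObj x₀ γ K ψd ψs ψ₂ α₂ lamStar ≤
      (⨆ lam : Set.Ioi (0 : ℝ), dualObj x₀ γ K ψd ψs ψ₂ α₂ lam.1) :=
    le_ciSup hbdd₂ ⟨lamStar, hlamStar⟩
  have key : dualObj x₀ γ K ψd ψs ψ₂ α₂ lamStar ≤ dualObj x₀ γ K ψd ψs ψ₁ α₁ lamStar := by
    rw [← hL1, heq]; exact hL2
  have hdiff : dualObj x₀ γ K ψd ψs ψ₂ α₂ lamStar =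
      dualObj x₀ γ K ψd ψs ψ₁ α₁ lamStar
        + γ / (1 - γ) * ((ψ₂ - ψ₁) * K lamStar 3 3) + lamStar * (α₁ - α₂) := by
    unfold dualObj
    rw [htr, htr]; ring
  have hc : 0 < γ / (1 - γ) := div_pos hγ.1 (by linarith [hγ.2])
  nlinarith [mul_pos hc (mul_pos (by linarith : (0:ℝ) < ψ₂ - ψ₁) hpos)]

end
end
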